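/- arXiv:1609.01312 — 4 statements merged into one kernel-verified Lean document; each statement's English description precedes it below -/
import Mathlib

section
/- Let $p, q$ be natural numbers, let $E = \mathbb{R}^p$ and $F = \mathbb{R}^q$, and let $f : E \times F \to \mathbb{R}$ be twice continuously differentiable. Define $g : E \times F \to (E \to_L \mathbb{R})$ by $g(h,v) = D_h f(h,v)$, and suppose $a$ satisfies $g(a) = 0$ with the horizontal Hessian $H_a$ (the Fréchet derivative at the first coordinate of $a$ of $h' \mapsto g(h', v_0)$) bijective. Then the kernel of the Fréchet derivative $Dg(a) : E \times F \to (E \to_L \mathbb{R})$ intersects the horizontal subspace $E \times \{0\}$ trivially: if $X = (X_h, 0)$ and $Dg(a)(X) = 0$, then $X_h = 0$. -/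
open ContinuousLinearMap

section PartialDerivative

variable {𝕜 : Type*} [NontriviallyNormedField 𝕜]
  {E F G : Type*} [NormedAddCommGroup E] [NormedSpace 𝕜 E] [NormedAddCommGroup F]
  [NormedSpace 𝕜 F] [NormedAddCommGroup G] [NormedSpace 𝕜 G]

theorem fderiv_partial_left {f : E × F → G} {x : E} {y : F}
    (hf : DifferentiableAt 𝕜 f (x, y)) :
    fderiv 𝕜 (fun x' => f (x', y)) x = (fderiv 𝕜 f (x, y)).comp (inl 𝕜 E F) :=
  (hf.hasFDerivAt.comp x (hasFDerivAt_prodMk_left x y)).fderiv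

theorem contDiff_fderiv_partial_left {n : WithTop ℕ∞} {f : E × F → G}
    (hf : ContDiff 𝕜 (n + 1) f) :
    ContDiff 𝕜 n fun z : E × F => fderiv 𝕜 (fun x' => f (x', z.2)) z.1 := by
  have hfd : Differentiable 𝕜 f := hf.differentiable (by simp)
  simp_rw [fun z : E × F => fderiv_partial_left (𝕜 := 𝕜) (hfd z)]
  exact (hf.fderiv_right le_rfl).clm_comp contDiff_const

end PartialDerivative

theorem kernel_meets_horizontal_trivially_at_morse_singularity_general {p q : ℕ}
    (f : EuclideanSpace ℝ (Fin p) × EuclideanSpace ℝ (Fin q) → ℝ)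
    (hf : ContDiff ℝ 2 f)
    (g : EuclideanSpace ℝ (Fin p) × EuclideanSpace ℝ (Fin q) →
      (EuclideanSpace ℝ (Fin p) →L[ℝ] ℝ))
    (hg : ∀ x, g x = fderiv ℝ (fun h' => f (h', x.2)) x.1)
    (a : EuclideanSpace ℝ (Fin p) × EuclideanSpace ℝ (Fin q))
    (H : EuclideanSpace ℝ (Fin p) →L[ℝ] (EuclideanSpace ℝ (Fin p) →L[ℝ] ℝ))
    (hH : H = fderiv ℝ (fun h' => g (h', a.2)) a.1)
    (hbij : Function.Bijective H) :
    ∀ Xh : EuclideanSpace ℝ (Fin p), fderiv ℝ g a (Xh, 0) = 0 → Xh = 0 := by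
  intro Xh hXh
  have hg_smooth : ContDiff ℝ 1 g := by
    rw [funext hg]
    exact contDiff_fderiv_partial_left (n := 1) hf
  have hH_eq : H = (fderiv ℝ g a).comp (inl ℝ _ _) := by
    rw [hH, fderiv_partial_left (hg_smooth.differentiable one_ne_zero a)]
  apply hbij.injective
  rw [map_zero, hH_eq]
  exact hXh

/-- Transversality assertion of Lemma 1: at a tangential Morse singularity, the
kernel of the derivative of the tangential differential meets the horizontal
subspace `E × {0}` trivially. -/
theorem kernel_meets_horizontal_trivially_at_morse_singularity {p q : ℕ}
    (f : EuclideanSpace ℝ (Fin p) × EuclideanSpace ℝ (Fin q) → ℝ)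
    (hf : ContDiff ℝ 2 f)
    (g : EuclideanSpace ℝ (Fin p) × EuclideanSpace ℝ (Fin q) →
      (EuclideanSpace ℝ (Fin p) →L[ℝ] ℝ))
    (hg : ∀ x, g x = fderiv ℝ (fun h' => f (h', x.2)) x.1)
    (a : EuclideanSpace ℝ (Fin p) × EuclideanSpace ℝ (Fin q))
    (ha : g a = 0)
    (H : EuclideanSpace ℝ (Fin p) →L[ℝ] (EuclideanSpace ℝ (Fin p) →L[ℝ] ℝ))
    (hH : H = fderiv ℝ (fun h' => g (h', a.2)) a.1)
    (hbij : Function.Bijective H) :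
    ∀ Xh : EuclideanSpace ℝ (Fin p), fderiv ℝ g a (Xh, 0) = 0 → Xh = 0 :=
  kernel_meets_horizontal_trivially_at_morse_singularity_general f hf g hg a H hH hbij
end

section
/- Let $H_0, H_1, H_2$ be complex Hilbert spaces and let $d_1 : H_0 \to H_1$ and $d_2 : H_1 \to H_2$ be bounded linear operators with $d_2 \circ d_1 = 0$. Set $\Delta = d_1 \circ d_1^* + d_2^* \circ d_2$. Then $H_1$ decomposes as the internal orthogonal direct sum $H_1 = \ker \Delta \oplus \overline{\mathrm{Im}\, d_1} \oplus \overline{\mathrm{Im}\, d_2^*}$: the three closed subspaces are pairwise orthogonal and their sum is all of $H_1$. -/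
/-!
Since `re ⟪Δx, x⟫ = ‖d₁* x‖² + ‖d₂ x‖²`, the harmonic vectors are `ker d₁* ⊓ ker d₂`, i.e. the
common orthogonal complement of `K = cl Im d₁` and `L = cl Im d₂*`. Because `d₂ d₁ = 0` we have
`K ≤ ker d₂ = Lᗮ`, and then `H₁ = L ⊔ Lᗮ = L ⊔ K ⊔ (Kᗮ ⊓ Lᗮ)` by orthogonal projection.
-/

open ContinuousLinearMap
open scoped InnerProduct

namespace Submodule

variable {𝕜 E : Type*} [RCLike 𝕜] [NormedAddCommGroup E] [InnerProductSpace 𝕜 E]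

theorem orthogonal_inf_sup_sup_eq_top {K L : Submodule 𝕜 E} [K.HasOrthogonalProjection]
    [L.HasOrthogonalProjection] (hKL : K ≤ Lᗮ) : Kᗮ ⊓ Lᗮ ⊔ K ⊔ L = ⊤ := by
  rw [sup_comm _ K, sup_orthogonal_inf_of_hasOrthogonalProjection hKL, sup_comm,
    sup_orthogonal_of_hasOrthogonalProjection]

end Submodule

namespace ContinuousLinearMap

variable {𝕜 E F G : Type*} [RCLike 𝕜]
  [NormedAddCommGroup E] [InnerProductSpace 𝕜 E] [NormedAddCommGroup F] [InnerProductSpace 𝕜 F]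
  [NormedAddCommGroup G] [InnerProductSpace 𝕜 G]

theorem closure_range_le_ker_of_comp_eq_zero {A : E →L[𝕜] F} {B : F →L[𝕜] G} (h : B ∘L A = 0) :
    A.range.topologicalClosure ≤ B.ker :=
  Submodule.topologicalClosure_minimal _ (by rintro _ ⟨x, rfl⟩; simpa using congr($h x))
    B.isClosed_ker

variable [CompleteSpace E] [CompleteSpace F] [CompleteSpace G]

theorem re_inner_self_comp_adjoint_add_adjoint_comp_self (A : E →L[𝕜] F) (B : F →L[𝕜] G) (x : F) :
    RCLike.re (inner 𝕜 ((A ∘L A† + B† ∘L B) x) x) = ‖(A†) x‖ ^ 2 + ‖B x‖ ^ 2 := by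
  rw [add_apply, inner_add_left, map_add, comp_apply, comp_apply, ← adjoint_inner_right A,
    adjoint_inner_left B, inner_self_eq_norm_sq, inner_self_eq_norm_sq]

theorem ker_self_comp_adjoint_add_adjoint_comp_self (A : E →L[𝕜] F) (B : F →L[𝕜] G) :
    (A ∘L A† + B† ∘L B).ker = A†.ker ⊓ B.ker := by
  refine le_antisymm (fun x hx ↦ ?_) fun x ⟨hA, hB⟩ ↦ by simp_all
  have hsum := re_inner_self_comp_adjoint_add_adjoint_comp_self A B x
  rw [show (A ∘L A† + B† ∘L B) x = 0 from hx, inner_zero_left, map_zero, eq_comm,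
    add_eq_zero_iff_of_nonneg (by positivity) (by positivity)] at hsum
  simpa using hsum

theorem orthogonal_closure_range (T : E →L[𝕜] F) : T.range.topologicalClosureᗮ = T†.ker := by
  rw [Submodule.orthogonal_closure, orthogonal_range]

end ContinuousLinearMap

/-- Full Hodge decomposition of the middle space of a bounded Hilbert complex
`d₂ ∘ d₁ = 0`: `H₁ = ker Δ ⊕ cl.Im d₁ ⊕ cl.Im d₂*`, with the three closed
subspaces pairwise orthogonal and summing to all of `H₁`. -/
theorem full_hodge_decomposition {H0 H1 H2 : Type*}
    [NormedAddCommGroup H0] [InnerProductSpace ℂ H0] [CompleteSpace H0]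
    [NormedAddCommGroup H1] [InnerProductSpace ℂ H1] [CompleteSpace H1]
    [NormedAddCommGroup H2] [InnerProductSpace ℂ H2] [CompleteSpace H2]
    (d1 : H0 →L[ℂ] H1) (d2 : H1 →L[ℂ] H2) (hdd : d2.comp d1 = 0) :
    (∀ x ∈ LinearMap.ker ((d1.comp (adjoint d1) + (adjoint d2).comp d2 : H1 →L[ℂ] H1) : H1 →ₗ[ℂ] H1),
      ∀ y ∈ (LinearMap.range (d1 : H0 →ₗ[ℂ] H1)).topologicalClosure, (inner ℂ x y : ℂ) = 0) ∧
    (∀ x ∈ LinearMap.ker ((d1.comp (adjoint d1) + (adjoint d2).comp d2 : H1 →L[ℂ] H1) : H1 →ₗ[ℂ] H1),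
      ∀ z ∈ (LinearMap.range (adjoint d2 : H2 →ₗ[ℂ] H1)).topologicalClosure,
        (inner ℂ x z : ℂ) = 0) ∧
    (∀ y ∈ (LinearMap.range (d1 : H0 →ₗ[ℂ] H1)).topologicalClosure,
      ∀ z ∈ (LinearMap.range (adjoint d2 : H2 →ₗ[ℂ] H1)).topologicalClosure,
        (inner ℂ y z : ℂ) = 0) ∧
    LinearMap.ker ((d1.comp (adjoint d1) + (adjoint d2).comp d2 : H1 →L[ℂ] H1) : H1 →ₗ[ℂ] H1) ⊔
        (LinearMap.range (d1 : H0 →ₗ[ℂ] H1)).topologicalClosure ⊔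
        (LinearMap.range (adjoint d2 : H2 →ₗ[ℂ] H1)).topologicalClosure = ⊤ := by
  have hL : d2†.range.topologicalClosureᗮ = d2.ker := by
    rw [orthogonal_closure_range, adjoint_adjoint]
  have hM : (d1 ∘L d1† + d2† ∘L d2).ker =
      d1.range.topologicalClosureᗮ ⊓ d2†.range.topologicalClosureᗮ := by
    rw [ker_self_comp_adjoint_add_adjoint_comp_self, orthogonal_closure_range, hL]
  have hKL : d1.range.topologicalClosure ≤ d2†.range.topologicalClosureᗮ :=
    hL ▸ closure_range_le_ker_of_comp_eq_zero hdd
  refine ⟨fun x hx y hy ↦ ?_, fun x hx z hz ↦ ?_, fun y hy z hz ↦ ?_, ?_⟩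
  · exact Submodule.inner_left_of_mem_orthogonal hy (hM ▸ hx).1
  · exact Submodule.inner_left_of_mem_orthogonal hz (hM ▸ hx).2
  · exact Submodule.inner_left_of_mem_orthogonal hz (hKL hy)
  · exact hM ▸ Submodule.orthogonal_inf_sup_sup_eq_top hKL
end

section
/- Let $H$ be a complex Hilbert space, let $K, K', I, I'$ be closed subspaces of $H$ with $I \subseteq K$ and $I' \subseteq K'$, and let $T : H \to H$ be a continuous linear equivalence (bounded invertible operator) such that $T(K) = K'$ and $T(I) = I'$. Set $A = K \cap I^{\perp}$ and $A' = K' \cap I'^{\perp}$. Then the map $U : A \to A'$ sending $x$ to the orthogonal projection onto $A'$ of $T x$ is a continuous linear equivalence (a bounded bijection with bounded inverse). -/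
/-!
Since `I' ≤ K'`, on `K'` the orthogonal projection onto `K' ⊓ I'ᗮ` is the projection onto `I'ᗮ`,
so the compression is `x ↦ P_{I'ᗮ} (T x)`. Its inverse is the compression `y ↦ P_{Iᗮ} (T⁻¹ y)` of
`T⁻¹`: `T⁻¹ (P_{I'ᗮ} (T x))` differs from `x` by `T⁻¹` of a vector of `I'`, which lies in `I` and
is killed by `P_{Iᗮ}`. Both maps are bounded, so no open mapping argument is needed.
-/

open Submodule

section

variable {𝕜 E F : Type*} [RCLike 𝕜]
  [NormedAddCommGroup E] [InnerProductSpace 𝕜 E] [NormedAddCommGroup F] [InnerProductSpace 𝕜 F]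
  {K I : Submodule 𝕜 E} {K' I' : Submodule 𝕜 F}

theorem Submodule.starProjection_orthogonal_mem_inf [I.HasOrthogonalProjection] (hIK : I ≤ K)
    {x : E} (hx : x ∈ K) : Iᗮ.starProjection x ∈ K ⊓ Iᗮ := by
  refine ⟨?_, Iᗮ.starProjection_apply_mem x⟩
  rw [starProjection_orthogonal_val]
  exact K.sub_mem hx (hIK (I.starProjection_apply_mem x))

theorem Submodule.starProjection_orthogonal_apply_starProjection_orthogonal
    [I.HasOrthogonalProjection] [I'.HasOrthogonalProjection]
    {S : F →L[𝕜] E} (hS : Set.MapsTo S I' I) (y : F) :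
    Iᗮ.starProjection (S (I'ᗮ.starProjection y)) = Iᗮ.starProjection (S y) := by
  rw [I'.starProjection_orthogonal_val y, map_sub, map_sub,
    starProjection_orthogonal_apply_eq_zero (hS (I'.starProjection_apply_mem y)), sub_zero]

noncomputable def ContinuousLinearMap.orthogonalCompression (T : E →L[𝕜] F)
    [I'.HasOrthogonalProjection] (hK : Set.MapsTo T K K') (hI' : I' ≤ K') :
    (K ⊓ Iᗮ : Submodule 𝕜 E) →L[𝕜] (K' ⊓ I'ᗮ : Submodule 𝕜 F) :=
  (I'ᗮ.starProjection ∘L T ∘L (K ⊓ Iᗮ).subtypeL).codRestrict _ fun x =>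
    starProjection_orthogonal_mem_inf hI' (hK x.2.1)

@[simp]
theorem ContinuousLinearMap.coe_orthogonalCompression_apply (T : E →L[𝕜] F)
    [I'.HasOrthogonalProjection] (hK : Set.MapsTo T K K') (hI' : I' ≤ K')
    (x : (K ⊓ Iᗮ : Submodule 𝕜 E)) :
    (T.orthogonalCompression hK hI' x : F) = I'ᗮ.starProjection (T x) :=
  rfl

theorem ContinuousLinearMap.leftInverse_orthogonalCompression
    [I.HasOrthogonalProjection] [I'.HasOrthogonalProjection] {T : E →L[𝕜] F} {S : F →L[𝕜] E}
    (hST : Function.LeftInverse S T) (hSI : Set.MapsTo S I' I)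
    (hTK : Set.MapsTo T K K') (hSK : Set.MapsTo S K' K) (hI' : I' ≤ K') (hI : I ≤ K) :
    Function.LeftInverse (S.orthogonalCompression hSK hI) (T.orthogonalCompression hTK hI') := by
  intro x
  ext
  rw [coe_orthogonalCompression_apply, coe_orthogonalCompression_apply,
    starProjection_orthogonal_apply_starProjection_orthogonal hSI, hST,
    starProjection_eq_self_iff.mpr x.2.2]

theorem ContinuousLinearEquiv.mapsTo_symm_of_image_eq (T : E ≃L[𝕜] F) {s : Set E} {t : Set F}
    (h : T '' s = t) : Set.MapsTo T.symm t s := by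
  rw [← h, T.image_eq_preimage_symm]
  exact Set.mapsTo_preimage _ _

noncomputable def ContinuousLinearEquiv.orthogonalCompression (T : E ≃L[𝕜] F)
    [I.HasOrthogonalProjection] [I'.HasOrthogonalProjection] (hK : T '' K = K') (hI : T '' I = I')
    (hIK : I ≤ K) :
    (K ⊓ Iᗮ : Submodule 𝕜 E) ≃L[𝕜] (K' ⊓ I'ᗮ : Submodule 𝕜 F) :=
  have hTK : Set.MapsTo T K K' := hK ▸ Set.mapsTo_image T K
  have hTI : Set.MapsTo T I I' := hI ▸ Set.mapsTo_image T I
  have hI'K' : I' ≤ K' := by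
    rw [← SetLike.coe_subset_coe, ← hI, ← hK]
    exact Set.image_mono hIK
  ContinuousLinearEquiv.equivOfInverse ((T : E →L[𝕜] F).orthogonalCompression hTK hI'K')
    ((T.symm : F →L[𝕜] E).orthogonalCompression (T.mapsTo_symm_of_image_eq hK) hIK)
    (ContinuousLinearMap.leftInverse_orthogonalCompression (fun x => T.symm_apply_apply x)
      (T.mapsTo_symm_of_image_eq hI) hTK (T.mapsTo_symm_of_image_eq hK) hI'K' hIK)
    (ContinuousLinearMap.leftInverse_orthogonalCompression (fun y => T.apply_symm_apply y) hTI
      (T.mapsTo_symm_of_image_eq hK) hTK hIK hI'K')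

theorem ContinuousLinearEquiv.coe_orthogonalCompression_apply (T : E ≃L[𝕜] F)
    [I.HasOrthogonalProjection] [I'.HasOrthogonalProjection] (hK : T '' K = K') (hI : T '' I = I')
    (hIK : I ≤ K) (x : (K ⊓ Iᗮ : Submodule 𝕜 E)) :
    (T.orthogonalCompression hK hI hIK x : F) = I'ᗮ.starProjection (T x) :=
  rfl

end

theorem compression_to_orthocomplements_is_equiv_general {H : Type*}
    [NormedAddCommGroup H] [InnerProductSpace ℂ H] [CompleteSpace H]
    (K K' I I' : Submodule ℂ H)
    (hI : IsClosed (I : Set H)) (hI' : IsClosed (I' : Set H))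
    (hIK : I ≤ K)
    (T : H ≃L[ℂ] H)
    (hTK : (T : H → H) '' (K : Set H) = (K' : Set H))
    (hTI : (T : H → H) '' (I : Set H) = (I' : Set H)) :
    ∃ U : (K ⊓ Iᗮ : Submodule ℂ H) ≃L[ℂ] (K' ⊓ I'ᗮ : Submodule ℂ H),
      ∀ x : (K ⊓ Iᗮ : Submodule ℂ H),
        T (x : H) - (U x : H) ∈ (K' ⊓ I'ᗮ : Submodule ℂ H)ᗮ := by
  have : CompleteSpace I := hI.completeSpace_coe
  have : CompleteSpace I' := hI'.completeSpace_coe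
  refine ⟨T.orthogonalCompression hTK hTI hIK, fun x => ?_⟩
  rw [T.coe_orthogonalCompression_apply]
  exact orthogonal_le inf_le_right (sub_starProjection_mem_orthogonal _)

/-- Operator-theoretic lemma of Proposition 1: if a bounded invertible operator `T`
carries closed subspaces `K, I` (with `I ⊆ K`) onto `K', I'` (with `I' ⊆ K'`), then
the compression `U : K ∩ I^⊥ → K' ∩ I'^⊥` of `T`, sending `x` to the orthogonal
projection of `T x` onto `K' ∩ I'^⊥` (characterized by `U x ∈ K' ∩ I'^⊥` and
`T x - U x ⊥ K' ∩ I'^⊥`), is a continuous linear equivalence. -/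
theorem compression_to_orthocomplements_is_equiv {H : Type*}
    [NormedAddCommGroup H] [InnerProductSpace ℂ H] [CompleteSpace H]
    (K K' I I' : Submodule ℂ H)
    (hK : IsClosed (K : Set H)) (hK' : IsClosed (K' : Set H))
    (hI : IsClosed (I : Set H)) (hI' : IsClosed (I' : Set H))
    (hIK : I ≤ K) (hI'K' : I' ≤ K')
    (T : H ≃L[ℂ] H)
    (hTK : (T : H → H) '' (K : Set H) = (K' : Set H))
    (hTI : (T : H → H) '' (I : Set H) = (I' : Set H)) :
    ∃ U : (K ⊓ Iᗮ : Submodule ℂ H) ≃L[ℂ] (K' ⊓ I'ᗮ : Submodule ℂ H),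
      ∀ x : (K ⊓ Iᗮ : Submodule ℂ H),
        T (x : H) - (U x : H) ∈ (K' ⊓ I'ᗮ : Submodule ℂ H)ᗮ :=
  compression_to_orthocomplements_is_equiv_general K K' I I' hI hI' hIK T hTK hTI
end

section
/- Let $H_0, H_1, H_2$ be complex Hilbert spaces, let $d_1 : H_0 \to H_1$ and $d_2 : H_1 \to H_2$ be bounded linear operators with $d_2 \circ d_1 = 0$, and let $T_0 : H_0 \to H_0$, $T_1 : H_1 \to H_1$, $T_2 : H_2 \to H_2$ be continuous linear equivalences. Set $d_1' = T_1 \circ d_1 \circ T_0^{-1}$ and $d_2' = T_2 \circ d_2 \circ T_1^{-1}$, and define the Laplacians $\Delta = d_1 d_1^* + d_2^* d_2$ and $\Delta' = d_1' (d_1')^* + (d_2')^* d_2'$ on $H_1$. Then the map $U : \ker \Delta \to \ker \Delta'$ sending $x$ to the orthogonal projection onto $\ker \Delta'$ of $T_1 x$ is a continuous linear equivalence; in particular $\ker \Delta$ and $\ker \Delta'$ are isomorphic as Hilbert spaces. -/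
/-! Let `P`, `P'` be the orthogonal projections onto `ker Δ`, `ker Δ'`. The harmonic space of
`d₁, d₂` is `(range d₁)ᗮ ⊓ ker d₂`, so any `z ∈ ker d₂` orthogonal to it lies in the closure of
`range d₁` (Hodge decomposition of `ker d₂`). For harmonic `x`, the defect `T₁ x - P' (T₁ x)` is
such a vector for the conjugated complex, and `T₁⁻¹` maps the closure of `range d₁'` into the
closure of `range d₁`, which is orthogonal to `ker Δ`. Hence `P T₁⁻¹ P' T₁ = id` on `ker Δ`; the
same argument for the inverse conjugation gives `P' T₁ P T₁⁻¹ = id` on `ker Δ'`. -/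

open scoped InnerProductSpace

namespace ContinuousLinearMap

section Complex

variable {𝕜 E F G : Type*} [NontriviallyNormedField 𝕜]
  [NormedAddCommGroup E] [NormedSpace 𝕜 E] [NormedAddCommGroup F] [NormedSpace 𝕜 F]
  [NormedAddCommGroup G] [NormedSpace 𝕜 G]
  {d1 e1 : E →L[𝕜] F} {d2 e2 : F →L[𝕜] G} {T0 : E ≃L[𝕜] E} {T1 : F ≃L[𝕜] F} {T2 : G ≃L[𝕜] G}

theorem closure_range_le_ker (hdd : d2 ∘L d1 = 0) :
    d1.range.topologicalClosure ≤ d2.ker := by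
  refine Submodule.topologicalClosure_minimal _ ?_ (isClosed_ker d2)
  rintro _ ⟨y, rfl⟩
  exact congr($hdd y)

theorem comp_eq_zero_of_eq_conj (hdd : d2 ∘L d1 = 0)
    (he1 : e1 = (T1 : F →L[𝕜] F) ∘L d1 ∘L (T0.symm : E →L[𝕜] E))
    (he2 : e2 = (T2 : G →L[𝕜] G) ∘L d2 ∘L (T1.symm : F →L[𝕜] F)) :
    e2 ∘L e1 = 0 := by
  subst he1 he2
  ext x
  simpa using congr($hdd (T0.symm x))

theorem eq_conj_symm_of_eq_conj (he1 : e1 = (T1 : F →L[𝕜] F) ∘L d1 ∘L (T0.symm : E →L[𝕜] E)) :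
    d1 = (T1.symm : F →L[𝕜] F) ∘L e1 ∘L (T0.symm.symm : E →L[𝕜] E) := by
  subst he1
  ext x
  simp

theorem symm_mem_closure_range_of_eq_conj
    (he1 : e1 = (T1 : F →L[𝕜] F) ∘L d1 ∘L (T0.symm : E →L[𝕜] E)) {w : F}
    (hw : w ∈ e1.range.topologicalClosure) : T1.symm w ∈ d1.range.topologicalClosure := by
  refine Submodule.topologicalClosure_minimal
    (t := d1.range.topologicalClosure.comap (T1.symm : F →ₗ[𝕜] F)) _ ?_
    (d1.range.isClosed_topologicalClosure.preimage T1.symm.continuous) hw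
  rintro _ ⟨y, rfl⟩
  apply Submodule.le_topologicalClosure
  simp [he1]

end Complex

section Harmonic

variable {𝕜 E F G : Type*} [RCLike 𝕜]
  [NormedAddCommGroup E] [InnerProductSpace 𝕜 E] [CompleteSpace E]
  [NormedAddCommGroup F] [InnerProductSpace 𝕜 F] [CompleteSpace F]
  [NormedAddCommGroup G] [InnerProductSpace 𝕜 G] [CompleteSpace G]

noncomputable def harmonicSpace (d1 : E →L[𝕜] F) (d2 : F →L[𝕜] G) : Submodule 𝕜 F :=
  LinearMap.ker ((d1.comp (adjoint d1) + (adjoint d2).comp d2 : F →L[𝕜] F) : F →ₗ[𝕜] F)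

variable (d1 : E →L[𝕜] F) (d2 : F →L[𝕜] G)

instance : CompleteSpace (harmonicSpace d1 d2) :=
  (isClosed_ker (d1.comp (adjoint d1) + (adjoint d2).comp d2)).completeSpace_coe

theorem re_inner_laplacian_self (x : F) :
    RCLike.re ⟪(d1.comp (adjoint d1) + (adjoint d2).comp d2) x, x⟫_𝕜 =
      ‖adjoint d1 x‖ ^ 2 + ‖d2 x‖ ^ 2 := by
  rw [apply_norm_sq_eq_inner_adjoint_left, apply_norm_sq_eq_inner_adjoint_left, adjoint_adjoint,
    add_apply, inner_add_left, map_add]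

theorem harmonicSpace_eq_orthogonal_range_inf_ker :
    harmonicSpace d1 d2 = d1.rangeᗮ ⊓ d2.ker := by
  ext x
  simp only [harmonicSpace, orthogonal_range, Submodule.mem_inf, LinearMap.mem_ker, coe_coe]
  refine ⟨fun hx => ?_, fun ⟨h1, h2⟩ => by simp [h1, h2]⟩
  have h := re_inner_laplacian_self d1 d2 x
  rw [hx, inner_zero_left, map_zero, eq_comm,
    add_eq_zero_iff_of_nonneg (by positivity) (by positivity)] at h
  simpa using h

theorem harmonicSpace_le_ker : harmonicSpace d1 d2 ≤ d2.ker := by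
  rw [harmonicSpace_eq_orthogonal_range_inf_ker]
  exact inf_le_right

theorem closure_range_le_orthogonal_harmonicSpace :
    d1.range.topologicalClosure ≤ (harmonicSpace d1 d2)ᗮ := by
  rw [← Submodule.orthogonal_orthogonal_eq_closure, harmonicSpace_eq_orthogonal_range_inf_ker]
  exact Submodule.orthogonal_le inf_le_left

variable {d1 d2}

theorem mem_closure_range_of_mem_ker_of_mem_orthogonal (hdd : d2 ∘L d1 = 0) {z : F}
    (hz : d2 z = 0) (hzK : z ∈ (harmonicSpace d1 d2)ᗮ) :
    z ∈ d1.range.topologicalClosure := by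
  set N := d1.rangeᗮ
  set p := N.starProjection z
  -- `z - p ∈ Nᗮ ⊆ ker d₂`, so `p` is harmonic; being orthogonal to `z`, it vanishes.
  have hp : p ∈ harmonicSpace d1 d2 := by
    have hzp : z - p ∈ d1.range.topologicalClosure := by
      rw [← Submodule.orthogonal_orthogonal_eq_closure]
      exact N.sub_starProjection_mem_orthogonal z
    have hp2 : d2 p = 0 := by
      simpa [hz] using closure_range_le_ker hdd hzp
    rw [harmonicSpace_eq_orthogonal_range_inf_ker]
    exact ⟨N.starProjection_apply_mem z, hp2⟩
  have hp0 : ‖N.orthogonalProjectionOnto z‖ ^ 2 = 0 := by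
    rw [← N.re_inner_starProjection_eq_normSq, hzK p hp, map_zero]
  rw [← Submodule.orthogonal_orthogonal_eq_closure, ← N.starProjection_apply_eq_zero_iff,
    N.starProjection_apply, Submodule.coe_eq_zero, ← norm_eq_zero]
  exact pow_eq_zero_iff two_ne_zero |>.mp hp0

variable {T0 : E ≃L[𝕜] E} {T1 : F ≃L[𝕜] F} {T2 : G ≃L[𝕜] G} {e1 : E →L[𝕜] F} {e2 : F →L[𝕜] G}

theorem starProjection_symm_starProjection_conj_apply (he : e2 ∘L e1 = 0)
    (he1 : e1 = (T1 : F →L[𝕜] F) ∘L d1 ∘L (T0.symm : E →L[𝕜] E))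
    (he2 : e2 = (T2 : G →L[𝕜] G) ∘L d2 ∘L (T1.symm : F →L[𝕜] F))
    {x : F} (hx : x ∈ harmonicSpace d1 d2) :
    (harmonicSpace d1 d2).starProjection (T1.symm ((harmonicSpace e1 e2).starProjection (T1 x)))
      = x := by
  set K := harmonicSpace d1 d2
  set K' := harmonicSpace e1 e2
  set w := T1 x - K'.starProjection (T1 x)
  have hw2 : e2 w = 0 := by
    have hK'2 : e2 (K'.starProjection (T1 x)) = 0 :=
      harmonicSpace_le_ker e1 e2 (K'.starProjection_apply_mem (T1 x))
    have hx2 : d2 x = 0 := harmonicSpace_le_ker d1 d2 hx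
    simp only [w, map_sub, hK'2, sub_zero]
    simp [he2, hx2]
  have hw : w ∈ e1.range.topologicalClosure :=
    mem_closure_range_of_mem_ker_of_mem_orthogonal he hw2 (K'.sub_starProjection_mem_orthogonal _)
  have hTw : T1.symm w ∈ Kᗮ := closure_range_le_orthogonal_harmonicSpace d1 d2
    (symm_mem_closure_range_of_eq_conj he1 hw)
  rw [show T1.symm (K'.starProjection (T1 x)) = x - T1.symm w by simp [w], map_sub,
    K.starProjection_apply_eq_zero_iff.mpr hTw, K.starProjection_eq_self_iff.mpr hx, sub_zero]

variable (T1) in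
noncomputable def conjHarmonicEquiv (hdd : d2 ∘L d1 = 0)
    (he1 : e1 = (T1 : F →L[𝕜] F) ∘L d1 ∘L (T0.symm : E →L[𝕜] E))
    (he2 : e2 = (T2 : G →L[𝕜] G) ∘L d2 ∘L (T1.symm : F →L[𝕜] F)) :
    harmonicSpace d1 d2 ≃L[𝕜] harmonicSpace e1 e2 :=
  ContinuousLinearEquiv.equivOfInverse
    ((harmonicSpace e1 e2).orthogonalProjectionOnto ∘L (T1 : F →L[𝕜] F) ∘L
      (harmonicSpace d1 d2).subtypeL)
    ((harmonicSpace d1 d2).orthogonalProjectionOnto ∘L (T1.symm : F →L[𝕜] F) ∘L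
      (harmonicSpace e1 e2).subtypeL)
    (fun x => Subtype.ext <|
      starProjection_symm_starProjection_conj_apply (comp_eq_zero_of_eq_conj hdd he1 he2) he1 he2
        x.2)
    (fun y => Subtype.ext <| by
      simpa using starProjection_symm_starProjection_conj_apply hdd
        (eq_conj_symm_of_eq_conj he1) (eq_conj_symm_of_eq_conj he2) y.2)

end Harmonic

end ContinuousLinearMap

open ContinuousLinearMap

/-- Hilbert-space content of Proposition 1: conjugating a bounded Hilbert complex
by invertible operators `Tᵢ` gives a deformed complex whose harmonic space
`ker Δ'` is isomorphic to `ker Δ` via the map sending `x` to the orthogonal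
projection of `T₁ x` onto `ker Δ'` (characterized by `U x ∈ ker Δ'` and
`T₁ x - U x ⊥ ker Δ'`). -/
theorem harmonic_spaces_of_conjugated_complexes_isomorphic {H0 H1 H2 : Type*}
    [NormedAddCommGroup H0] [InnerProductSpace ℂ H0] [CompleteSpace H0]
    [NormedAddCommGroup H1] [InnerProductSpace ℂ H1] [CompleteSpace H1]
    [NormedAddCommGroup H2] [InnerProductSpace ℂ H2] [CompleteSpace H2]
    (d1 : H0 →L[ℂ] H1) (d2 : H1 →L[ℂ] H2) (hdd : d2.comp d1 = 0)
    (T0 : H0 ≃L[ℂ] H0) (T1 : H1 ≃L[ℂ] H1) (T2 : H2 ≃L[ℂ] H2)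
    (d1' : H0 →L[ℂ] H1) (d2' : H1 →L[ℂ] H2)
    (hd1' : d1' = (T1 : H1 →L[ℂ] H1).comp (d1.comp (T0.symm : H0 →L[ℂ] H0)))
    (hd2' : d2' = (T2 : H2 →L[ℂ] H2).comp (d2.comp (T1.symm : H1 →L[ℂ] H1))) :
    ∃ U : LinearMap.ker ((d1.comp (adjoint d1) + (adjoint d2).comp d2 : H1 →L[ℂ] H1) : H1 →ₗ[ℂ] H1) ≃L[ℂ]
        LinearMap.ker ((d1'.comp (adjoint d1') + (adjoint d2').comp d2' : H1 →L[ℂ] H1) : H1 →ₗ[ℂ] H1),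
      ∀ x : LinearMap.ker ((d1.comp (adjoint d1) + (adjoint d2).comp d2 : H1 →L[ℂ] H1) : H1 →ₗ[ℂ] H1),
        T1 (x : H1) - (U x : H1) ∈
          (LinearMap.ker ((d1'.comp (adjoint d1') + (adjoint d2').comp d2' : H1 →L[ℂ] H1) : H1 →ₗ[ℂ] H1))ᗮ :=
  ⟨conjHarmonicEquiv T1 hdd hd1' hd2', fun _ => Submodule.sub_starProjection_mem_orthogonal _⟩
end
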